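/- arXiv:1612.02651 — 2 statements merged into one kernel-verified Lean document; each statement's English description precedes it below -/
import Mathlib

section
/- Let G be a τ₂-group and let a, b ∈ G be c-small elements with c := [a,b] ≠ 1. Then c has infinite order in G, and the set {[a,x] : x ∈ C_G(b)} equals {c^t : t ∈ ℤ}. -/
open scoped commutatorElement

noncomputable def grpRank (G : Type*) [Group G] : ℕ :=
  sInf {k : ℕ | ∃ S : Finset G, S.card = k ∧ Subgroup.closure (S : Set G) = ⊤}

def IsTau2 (G : Type*) [Group G] : Prop :=
  Group.FG G ∧ (∀ g : G, g ≠ 1 → ¬IsOfFinOrder g) ∧ ∀ g h : G, ⁅g, h⁆ ∈ Subgroup.center G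

def prodPow {G : Type*} [Group G] {k : ℕ} (v : Fin k → G) (e : Fin k → ℤ) : G :=
  (List.ofFn fun i => v i ^ e i).prod

def tau2Rels (n m : ℕ) (lam : Fin m → Fin n → Fin n → ℤ) :
    Set (FreeGroup (Fin n ⊕ Fin m)) :=
  {r | (∃ i j : Fin n, i < j ∧
          r = ⁅(FreeGroup.of (Sum.inl i) : FreeGroup (Fin n ⊕ Fin m)),
              FreeGroup.of (Sum.inl j)⁆ *
              (prodPow (fun t : Fin m => FreeGroup.of (Sum.inr t)) (fun t => lam t i j))⁻¹) ∨
       (∃ (i : Fin n) (t : Fin m), r = ⁅(FreeGroup.of (Sum.inl i) : FreeGroup (Fin n ⊕ Fin m)),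
              FreeGroup.of (Sum.inr t)⁆) ∨
       (∃ t s : Fin m, r = ⁅(FreeGroup.of (Sum.inr t) : FreeGroup (Fin n ⊕ Fin m)),
              FreeGroup.of (Sum.inr s)⁆)}

def Tau2Group (n m : ℕ) (lam : Fin m → Fin n → Fin n → ℤ) : Type :=
  PresentedGroup (tau2Rels n m lam)

instance (n m : ℕ) (lam : Fin m → Fin n → Fin n → ℤ) : Group (Tau2Group n m lam) :=
  inferInstanceAs (Group (PresentedGroup (tau2Rels n m lam)))

def tau2a {n m : ℕ} {lam : Fin m → Fin n → Fin n → ℤ} (i : Fin n) : Tau2Group n m lam :=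
  PresentedGroup.of (Sum.inl i)

def tau2c {n m : ℕ} {lam : Fin m → Fin n → Fin n → ℤ} (t : Fin m) : Tau2Group n m lam :=
  PresentedGroup.of (Sum.inr t)

def IsCSmall {G : Type*} [Group G] (g : G) : Prop :=
  ∀ x : G, x ∈ Subgroup.centralizer {g} ↔
    ∃ (t : ℤ) (z : G), z ∈ Subgroup.center G ∧ x = g ^ t * z

def IsMalcevBasis {G : Type*} [Group G] {n m : ℕ} (a : Fin n → G) (c : Fin m → G) : Prop :=
  (∀ t, c t ∈ Subgroup.center G) ∧
  (commutator G ≤ Subgroup.closure (Set.range c)) ∧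
  (∀ g : G, ∃! p : (Fin n → ℤ) × (Fin m → ℤ), g = prodPow a p.1 * prodPow c p.2)

/-
The commutator map `x ↦ ⁅a, x⁆` kills the centre, and on the powers of `b` it is a homomorphism as
soon as `⁅a, b⁆` is central. For a c-small `b` the centralizer of `b` is `⟨b⟩ · Z(G)`, so its image
is the cyclic group generated by `⁅a, b⁆`, which is infinite because `G` is torsion-free.
-/

section Commutator

variable {G : Type*} [Group G]

theorem commutatorElement_mul_right_of_mem_center (a y : G) {z : G}
    (hz : z ∈ Subgroup.center G) : ⁅a, y * z⁆ = ⁅a, y⁆ := by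
  have haz : ⁅a, z⁆ = 1 := Commute.commutator_eq (Subgroup.mem_center_iff.mp hz a)
  rw [commutatorElement_mul_right_eq_mul_conj, haz, mul_one, mul_inv_cancel_right]

theorem commutatorElement_zpow_right_of_mem_center {a b : G} (hc : ⁅a, b⁆ ∈ Subgroup.center G)
    (t : ℤ) : ⁅a, b ^ t⁆ = ⁅a, b⁆ ^ t := by
  have hconj : a * b * a⁻¹ = ⁅a, b⁆ * b := by group
  have hconj_zpow : a * b ^ t * a⁻¹ = ⁅a, b⁆ ^ t * b ^ t := by
    rw [← conj_zpow, hconj, Commute.mul_zpow (Subgroup.mem_center_iff.mp hc b).symm]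
  rw [commutatorElement_def, hconj_zpow, mul_inv_cancel_right]

theorem exists_commutatorElement_centralizer_iff_of_isCSmall {a b : G} (hb : IsCSmall b)
    (hc : ⁅a, b⁆ ∈ Subgroup.center G) (x : G) :
    (∃ y ∈ Subgroup.centralizer {b}, x = ⁅a, y⁆) ↔ ∃ t : ℤ, x = ⁅a, b⁆ ^ t := by
  constructor
  · rintro ⟨y, hy, rfl⟩
    obtain ⟨t, z, hz, rfl⟩ := (hb y).mp hy
    exact ⟨t, by rw [commutatorElement_mul_right_of_mem_center _ _ hz,
      commutatorElement_zpow_right_of_mem_center hc]⟩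
  · rintro ⟨t, rfl⟩
    exact ⟨b ^ t, Subgroup.zpow_mem _ (Subgroup.mem_centralizer_singleton_iff.mpr rfl) t,
      (commutatorElement_zpow_right_of_mem_center hc t).symm⟩

end Commutator

theorem stmt8_general (G : Type) [Group G] (hT : IsTau2 G) (a b : G)
    (hb : IsCSmall b) (hc : ⁅a, b⁆ ≠ 1) :
    ¬ IsOfFinOrder ⁅a, b⁆ ∧
    ∀ x : G, (∃ y ∈ Subgroup.centralizer {b}, x = ⁅a, y⁆) ↔ ∃ t : ℤ, x = ⁅a, b⁆ ^ t := by
  obtain ⟨-, htorsionFree, hcentral⟩ := hT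
  exact ⟨htorsionFree _ hc, exists_commutatorElement_centralizer_iff_of_isCSmall hb (hcentral a b)⟩

/-- If G is a τ₂-group and a, b are c-small with c := [a,b] ≠ 1, then c has
infinite order and {[a,x] : x ∈ C_G(b)} = {cᵗ : t ∈ ℤ}. -/
theorem stmt8 (G : Type) [Group G] (hT : IsTau2 G) (a b : G)
    (ha : IsCSmall a) (hb : IsCSmall b) (hc : ⁅a, b⁆ ≠ 1) :
    ¬ IsOfFinOrder ⁅a, b⁆ ∧
    ∀ x : G, (∃ y ∈ Subgroup.centralizer {b}, x = ⁅a, y⁆) ↔ ∃ t : ℤ, x = ⁅a, b⁆ ^ t :=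
  stmt8_general G hT a b hb hc
end

section
/- Let G be a τ₂-group with Malcev basis (A;C) = (a_1,…,a_n; c_1,…,c_m), n ≥ 2. Assume that [a_i,a_j] ≠ 1 for all i ≠ j and that each a_i (i = 1,…,n) is c-small. Then every ring of scalars of G is isomorphic, as a ring, to the ring of integers ℤ. -/
open scoped commutatorElement

lemma mem_commutator_self {G : Type*} [Group G] (g h : G) : ⁅g, h⁆ ∈ commutator G := by
  rw [commutator_def]
  exact Subgroup.commutator_mem_commutator (Subgroup.mem_top g) (Subgroup.mem_top h)

/-- A ring of scalars of a τ₂-group G: a commutative ring R acting faithfully by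
(additive, i.e. multiplicative in the group notation) endomorphisms on the abelian
groups G/Z(G) and G', compatibly with the bilinear map induced by the commutator:
f(r·x, y) = f(x, r·y) = r·f(x, y). -/
structure RingOfScalarsOn (R : Type*) (G : Type*) [CommRing R] [Group G] where
  actQ : R → (G ⧸ Subgroup.center G) → (G ⧸ Subgroup.center G)
  actN : R → ↥(commutator G) → ↥(commutator G)
  actQ_map_mul : ∀ r x y, actQ r (x * y) = actQ r x * actQ r y
  actN_map_mul : ∀ r x y, actN r (x * y) = actN r x * actN r y
  actQ_one : ∀ x, actQ 1 x = x
  actN_one : ∀ x, actN 1 x = x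
  actQ_add : ∀ r s x, actQ (r + s) x = actQ r x * actQ s x
  actN_add : ∀ r s x, actN (r + s) x = actN r x * actN s x
  actQ_mul : ∀ r s x, actQ (r * s) x = actQ r (actQ s x)
  actN_mul : ∀ r s x, actN (r * s) x = actN r (actN s x)
  actQ_faithful : ∀ r s : R, (∀ x, actQ r x = actQ s x) → r = s
  actN_faithful : ∀ r s : R, (∀ x, actN r x = actN s x) → r = s
  compat_left : ∀ (r : R) (g h g' : G),
    (QuotientGroup.mk g' : G ⧸ Subgroup.center G) = actQ r (QuotientGroup.mk g) →
    actN r ⟨⁅g, h⁆, mem_commutator_self g h⟩ = ⟨⁅g', h⁆, mem_commutator_self g' h⟩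
  compat_right : ∀ (r : R) (g h h' : G),
    (QuotientGroup.mk h' : G ⧸ Subgroup.center G) = actQ r (QuotientGroup.mk h) →
    actN r ⟨⁅g, h⁆, mem_commutator_self g h⟩ = ⟨⁅g, h'⁆, mem_commutator_self g h'⟩

/-!
Let `Q = G/Z(G)`. For a scalar `r` and a generator `aᵢ`, pick `g` with `ḡ = r·āᵢ`. Compatibility of
the action with the commutator pairing gives `[g, aᵢ] = r·[aᵢ, aᵢ] = [aᵢ, g] = [g, aᵢ]⁻¹`, so
`[g, aᵢ]` is trivial by torsion-freeness, and c-smallness of `aᵢ` forces `r·āᵢ = āᵢ^tᵢ` for some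
integer `tᵢ`. Comparing `[aᵢ^tᵢ, aⱼ] = r·[aᵢ, aⱼ] = [aᵢ, aⱼ^tⱼ]` shows that all `tᵢ` agree, so `r`
acts on the abelian group `Q` as the power map `x ↦ x^t`, and faithfulness gives `r = t`. Finally
`ℤ → R` is injective since `k` acts as `x ↦ x^k` and `ā₁` has infinite order in `Q`, as
`[a₁, a₂] ≠ 1`.
-/

open Subgroup

section CentralCommutators

variable {G : Type*} [Group G] (hc : ∀ g h : G, ⁅g, h⁆ ∈ center G)
include hc

theorem commutatorElement_mul_left_of_forall_mem_center (a b c : G) :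
    ⁅a * b, c⁆ = ⁅a, c⁆ * ⁅b, c⁆ := by
  rw [commutatorElement_mul_left_eq_conj_mul, mem_center_iff.mp (hc b c) a,
    mul_inv_cancel_right, mem_center_iff.mp (hc b c)]

theorem commutatorElement_zpow_left_of_forall_mem_center (g h : G) (k : ℤ) :
    ⁅g ^ k, h⁆ = ⁅g, h⁆ ^ k :=
  map_zpow (MonoidHom.mk' (⁅·, h⁆) fun a b =>
    commutatorElement_mul_left_of_forall_mem_center hc a b h) g k

theorem commutatorElement_zpow_right_of_forall_mem_center (g h : G) (k : ℤ) :
    ⁅g, h ^ k⁆ = ⁅g, h⁆ ^ k := by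
  rw [← commutatorElement_inv, commutatorElement_zpow_left_of_forall_mem_center hc, ← inv_zpow,
    commutatorElement_inv]

theorem isMulCommutative_quotient_center_of_forall_mem_center :
    IsMulCommutative (G ⧸ center G) :=
  Normal.quotient_commutative_iff_commutator_le.mpr <| by
    rw [commutator_def, commutator_le]
    exact fun g _ h _ => hc g h

theorem injective_zpow_mk_center_of_commutatorElement_ne_one
    (htf : ∀ g : G, g ≠ 1 → ¬IsOfFinOrder g) {g h : G} (hgh : ⁅g, h⁆ ≠ 1) :
    Function.Injective fun t : ℤ => (g : G ⧸ center G) ^ t := by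
  rw [injective_zpow_iff_not_isOfFinOrder, isOfFinOrder_iff_zpow_eq_one]
  rintro ⟨k, hk, hgk⟩
  have hcentral : g ^ k ∈ center G := by
    rwa [← QuotientGroup.eq_one_iff, QuotientGroup.mk_zpow]
  refine htf _ hgh (isOfFinOrder_iff_zpow_eq_one.mpr ⟨k, hk, ?_⟩)
  rw [← commutatorElement_zpow_left_of_forall_mem_center hc,
    commutatorElement_eq_one_iff_mul_comm, mem_center_iff.mp hcentral]

end CentralCommutators

theorem MonoidHom.eq_zpow_of_closure_eq_top {Q : Type*} [Group Q] [IsMulCommutative Q]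
    (φ : Q →* Q) {s : Set Q} (hs : closure s = ⊤) {t : ℤ} (h : ∀ x ∈ s, φ x = x ^ t) (x : Q) :
    φ x = x ^ t :=
  open IsMulCommutative in
  DFunLike.congr_fun (MonoidHom.eq_of_eqOn_dense hs (g := zpowGroupHom t) h) x

section MalcevBasis

variable {G : Type*} [Group G]

theorem prodPow_mem {H : Subgroup G} {k : ℕ} {v : Fin k → G} (hv : ∀ i, v i ∈ H) (e : Fin k → ℤ) :
    prodPow v e ∈ H :=
  list_prod_mem <| by
    rintro _ hx
    obtain ⟨i, rfl⟩ := List.mem_ofFn.mp hx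
    exact zpow_mem (hv i) _

theorem map_prodPow {H : Type*} [Group H] (f : G →* H) {k : ℕ} (v : Fin k → G) (e : Fin k → ℤ) :
    f (prodPow v e) = prodPow (f ∘ v) e := by
  simp [prodPow, map_list_prod, List.map_ofFn, Function.comp_def]

theorem IsMalcevBasis.closure_range_mk_center {n m : ℕ} {a : Fin n → G} {c : Fin m → G}
    (hMB : IsMalcevBasis a c) :
    closure (Set.range fun i => (a i : G ⧸ center G)) = ⊤ := by
  refine eq_top_iff.mpr fun x _ => ?_
  obtain ⟨g, rfl⟩ := QuotientGroup.mk_surjective x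
  obtain ⟨⟨p, q⟩, rfl, -⟩ := hMB.2.2 g
  have hq : ((prodPow c q : G) : G ⧸ center G) = 1 :=
    (QuotientGroup.eq_one_iff _).mpr (prodPow_mem hMB.1 q)
  rw [QuotientGroup.mk_mul, hq, mul_one, ← QuotientGroup.mk'_apply, map_prodPow]
  exact prodPow_mem (fun i => subset_closure (Set.mem_range_self i)) p

end MalcevBasis

namespace RingOfScalarsOn

variable {R G : Type*} [CommRing R] [Group G] (S : RingOfScalarsOn R G)

def actQHom (r : R) : G ⧸ center G →* G ⧸ center G :=
  MonoidHom.mk' (S.actQ r) (S.actQ_map_mul r)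

theorem actQ_intCast (k : ℤ) (x : G ⧸ center G) : S.actQ k x = x ^ k := by
  let f : R →+ Additive (G ⧸ center G) :=
    AddMonoidHom.mk' (fun r => Additive.ofMul (S.actQ r x)) fun r s => S.actQ_add r s x
  have hf : Additive.ofMul (S.actQ (k • 1) x) = k • Additive.ofMul (S.actQ 1 x) :=
    map_zsmul f k 1
  rw [zsmul_one, S.actQ_one, ← ofMul_zpow] at hf
  exact Additive.ofMul.injective hf

theorem commute_of_mk_eq_actQ (htf : ∀ g : G, g ≠ 1 → ¬IsOfFinOrder g) {r : R} {g g' : G}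
    (hg' : (g' : G ⧸ center G) = S.actQ r g) : Commute g' g := by
  have hsymm : ⁅g', g⁆ = ⁅g, g'⁆ :=
    congrArg Subtype.val ((S.compat_left r g g g' hg').symm.trans (S.compat_right r g g g' hg'))
  have hsq : ⁅g', g⁆ ^ 2 = 1 := by
    rw [sq]
    nth_rewrite 2 [hsymm]
    rw [← commutatorElement_inv, inv_mul_cancel]
  by_contra hne
  exact htf _ (mt commutatorElement_eq_one_iff_commute.mp hne)
    (isOfFinOrder_iff_pow_eq_one.mpr ⟨2, two_pos, hsq⟩)

theorem exists_actQ_mk_eq_zpow_of_isCSmall (htf : ∀ g : G, g ≠ 1 → ¬IsOfFinOrder g) {g : G}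
    (hg : IsCSmall g) (r : R) : ∃ t : ℤ, S.actQ r g = (g : G ⧸ center G) ^ t := by
  obtain ⟨g', hg'⟩ := QuotientGroup.mk_surjective (S.actQ r g)
  have hmem : g' ∈ centralizer {g} :=
    mem_centralizer_singleton_iff.mpr (S.commute_of_mk_eq_actQ htf hg').eq
  obtain ⟨t, z, hz, rfl⟩ := (hg g').mp hmem
  refine ⟨t, ?_⟩
  rw [← hg', QuotientGroup.mk_mul, (QuotientGroup.eq_one_iff z).mpr hz, mul_one,
    QuotientGroup.mk_zpow]

theorem commutatorElement_zpow_eq_of_actQ_eq_zpow (hc : ∀ g h : G, ⁅g, h⁆ ∈ center G)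
    {r : R} {g h : G} {t s : ℤ} (hg : S.actQ r g = (g : G ⧸ center G) ^ t)
    (hh : S.actQ r h = (h : G ⧸ center G) ^ s) : ⁅g, h⁆ ^ t = ⁅g, h⁆ ^ s :=
  calc ⁅g, h⁆ ^ t = ⁅g ^ t, h⁆ := (commutatorElement_zpow_left_of_forall_mem_center hc g h t).symm
    _ = ⁅g, h ^ s⁆ := congrArg Subtype.val <|
        (S.compat_left r g h _ (by rw [QuotientGroup.mk_zpow, hg])).symm.trans
          (S.compat_right r g h _ (by rw [QuotientGroup.mk_zpow, hh]))
    _ = ⁅g, h⁆ ^ s := commutatorElement_zpow_right_of_forall_mem_center hc g h s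

theorem exists_forall_actQ_eq_zpow (htf : ∀ g : G, g ≠ 1 → ¬IsOfFinOrder g)
    (hc : ∀ g h : G, ⁅g, h⁆ ∈ center G) {n : ℕ} {a : Fin n → G}
    (hgen : closure (Set.range fun i => (a i : G ⧸ center G)) = ⊤)
    (hne : ∀ i j : Fin n, i ≠ j → ⁅a i, a j⁆ ≠ 1) (hcs : ∀ i : Fin n, IsCSmall (a i))
    (i₀ : Fin n) (r : R) : ∃ t : ℤ, ∀ x, S.actQ r x = x ^ t := by
  obtain ⟨t, ht⟩ := S.exists_actQ_mk_eq_zpow_of_isCSmall htf (hcs i₀) r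
  have hgens : ∀ i, S.actQ r (a i) = (a i : G ⧸ center G) ^ t := by
    intro i
    obtain ⟨s, hs⟩ := S.exists_actQ_mk_eq_zpow_of_isCSmall htf (hcs i) r
    rcases eq_or_ne i₀ i with rfl | hi
    · exact ht
    · rw [hs, injective_zpow_iff_not_isOfFinOrder.mpr (htf _ (hne i₀ i hi))
        (S.commutatorElement_zpow_eq_of_actQ_eq_zpow hc ht hs).symm]
  have := isMulCommutative_quotient_center_of_forall_mem_center hc
  exact ⟨t, (S.actQHom r).eq_zpow_of_closure_eq_top hgen (Set.forall_mem_range.mpr hgens)⟩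

theorem bijective_intCast (hR : ∀ r : R, ∃ t : ℤ, ∀ x, S.actQ r x = x ^ t)
    {x₀ : G ⧸ center G} (hx₀ : Function.Injective fun t : ℤ => x₀ ^ t) :
    Function.Bijective (Int.cast : ℤ → R) := by
  refine ⟨fun k l hkl => hx₀ ?_, fun r => ?_⟩
  · simp only [← S.actQ_intCast, hkl]
  · obtain ⟨t, ht⟩ := hR r
    exact ⟨t, S.actQ_faithful _ _ fun x => by rw [ht, actQ_intCast]⟩

end RingOfScalarsOn

/-- If G is a τ₂-group with Malcev basis (a₁,…,aₙ; c₁,…,cₘ), n ≥ 2, such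
that [aᵢ,aⱼ] ≠ 1 for all i ≠ j and every aᵢ is c-small, then every ring of scalars of G
is isomorphic as a ring to ℤ. -/
theorem stmt10 (G : Type) [Group G] (n m : ℕ) (hn : 2 ≤ n)
    (a : Fin n → G) (c : Fin m → G)
    (hT : IsTau2 G) (hMB : IsMalcevBasis a c)
    (hne : ∀ i j : Fin n, i ≠ j → ⁅a i, a j⁆ ≠ 1)
    (hcs : ∀ i : Fin n, IsCSmall (a i)) :
    ∀ (R : Type) [CommRing R], RingOfScalarsOn R G → Nonempty (R ≃+* ℤ) := by
  intro R _ S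
  obtain ⟨-, htf, hc⟩ := hT
  let i₀ : Fin n := ⟨0, by omega⟩
  let i₁ : Fin n := ⟨1, by omega⟩
  have hinj := injective_zpow_mk_center_of_commutatorElement_ne_one hc htf
    (hne i₀ i₁ (by simp [i₀, i₁, Fin.ext_iff]))
  have hR := S.exists_forall_actQ_eq_zpow htf hc hMB.closure_range_mk_center hne hcs i₀
  exact ⟨(RingEquiv.ofBijective (Int.castRingHom R) (S.bijective_intCast hR hinj)).symm⟩
end
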